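/- arXiv:2310.12003 — 5 statements merged into one kernel-verified Lean document; each statement's English description precedes it below -/
import Mathlib

section
/- Let d ≥ 1 and let x, y ∈ AdS^{d+1} with x ≠ y. Then the following are equivalent: (i) x and y lie on a common lightlike geodesic, i.e. there exist a, b ∈ ℝ^{d+2} with q(a) = −1, q(b) = 0, b ≠ 0, ⟨a, b⟩ = 0 and real numbers t₁ ≠ t₂ such that x = a + t₁·b and y = a + t₂·b; (ii) ⟨x, y⟩ = −1. -/
noncomputable section

/-- The coefficient of the signature-(d,2) quadratic form: +1 on the first `d`
coordinates, −1 on the last two. -/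
def eps (d : ℕ) (i : Fin (d + 2)) : ℝ := if (i : ℕ) < d then 1 else -1

/-- The bilinear form ⟨·,·⟩ of signature (d,2) on ℝ^{d+2}. -/
def bil (d : ℕ) (x y : EuclideanSpace ℝ (Fin (d + 2))) : ℝ := ∑ i, eps d i * x i * y i

/-- The quadratic form q of signature (d,2). -/
def quad (d : ℕ) (x : EuclideanSpace ℝ (Fin (d + 2))) : ℝ := bil d x x

lemma bil_expand (d : ℕ) (a b : EuclideanSpace ℝ (Fin (d + 2))) (t s : ℝ) :
    bil d (a + t • b) (a + s • b) =
      bil d a a + (t + s) * bil d a b + t * s * bil d b b := by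
  simp only [bil, Finset.mul_sum, ← Finset.sum_add_distrib]
  apply Finset.sum_congr rfl
  intro i _
  simp only [PiLp.add_apply, PiLp.smul_apply, smul_eq_mul]
  ring

lemma bil_sub_pair (d : ℕ) (x y : EuclideanSpace ℝ (Fin (d + 2))) :
    bil d x (y - x) = bil d x y - bil d x x ∧
    bil d (y - x) (y - x) = bil d y y - bil d x y - bil d x y + bil d x x := by
  constructor <;>
  · simp only [bil, ← Finset.sum_sub_distrib, ← Finset.sum_add_distrib]
    apply Finset.sum_congr rfl
    intro i _
    simp only [PiLp.sub_apply]
    ring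

/-- two distinct points of AdS^{d+1} lie on a common lightlike
geodesic iff ⟨x, y⟩ = −1. -/
theorem lightlike_related_iff (d : ℕ) (hd : 1 ≤ d)
    (x y : EuclideanSpace ℝ (Fin (d + 2)))
    (hx : quad d x = -1) (hy : quad d y = -1) (hxy : x ≠ y) :
    (∃ a b : EuclideanSpace ℝ (Fin (d + 2)),
        quad d a = -1 ∧ quad d b = 0 ∧ b ≠ 0 ∧ bil d a b = 0 ∧
        ∃ t₁ t₂ : ℝ, t₁ ≠ t₂ ∧ x = a + t₁ • b ∧ y = a + t₂ • b) ↔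
      bil d x y = -1 := by
  constructor
  · rintro ⟨a, b, ha, hb, hb0, hab, t₁, t₂, ht, hx', hy'⟩
    rw [hx', hy', bil_expand]
    rw [quad] at ha hb
    rw [ha, hb, hab]; ring
  · intro h
    refine ⟨x, y - x, hx, ?_, ?_, ?_, 0, 1, by norm_num, by simp, ?_⟩
    · rw [quad, (bil_sub_pair d x y).2, h]
      rw [quad] at hx hy
      rw [hx, hy]; ring
    · intro hc
      exact hxy (by rw [sub_eq_zero] at hc; exact hc.symm)
    · rw [(bil_sub_pair d x y).1, h]
      rw [quad] at hx
      rw [hx]; ring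
    · simp
end
end

section
/- Let d ≥ 1 and let x, y ∈ AdS^{d+1} with x ≠ y and x ≠ −y. Then the following are equivalent: (i) x and y lie on a common timelike geodesic, i.e. there exist a, b ∈ ℝ^{d+2} with q(a) = −1, q(b) = −1, ⟨a, b⟩ = 0 and real numbers t₁, t₂ such that x = cos(t₁)·a + sin(t₁)·b and y = cos(t₂)·a + sin(t₂)·b; (ii) −1 < ⟨x, y⟩ < 1. -/
noncomputable section

namespace AdSAux

variable {d : ℕ}

lemma bil_symm (x y : EuclideanSpace ℝ (Fin (d + 2))) : bil d x y = bil d y x := by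
  unfold bil; exact Finset.sum_congr rfl fun i _ => by ring

lemma bil_add_right (x y z : EuclideanSpace ℝ (Fin (d + 2))) :
    bil d x (y + z) = bil d x y + bil d x z := by
  unfold bil
  rw [← Finset.sum_add_distrib]
  exact Finset.sum_congr rfl fun i _ => by
    simp only [PiLp.add_apply]; ring

lemma bil_smul_right (c : ℝ) (x y : EuclideanSpace ℝ (Fin (d + 2))) :
    bil d x (c • y) = c * bil d x y := by
  unfold bil
  rw [Finset.mul_sum]
  exact Finset.sum_congr rfl fun i _ => by
    simp only [PiLp.smul_apply, smul_eq_mul]; ring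

lemma bil_add_left (x y z : EuclideanSpace ℝ (Fin (d + 2))) :
    bil d (x + y) z = bil d x z + bil d y z := by
  rw [bil_symm, bil_add_right, bil_symm z x, bil_symm z y]

lemma bil_smul_left (c : ℝ) (x y : EuclideanSpace ℝ (Fin (d + 2))) :
    bil d (c • x) y = c * bil d x y := by
  rw [bil_symm, bil_smul_right, bil_symm]

lemma bil_expand (a b : EuclideanSpace ℝ (Fin (d + 2))) (α β γ δ : ℝ)
    (ha : quad d a = -1) (hb : quad d b = -1) (hab : bil d a b = 0) :
    bil d (α • a + β • b) (γ • a + δ • b) = -(α * γ) - β * δ := by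
  have hba : bil d b a = 0 := by rw [bil_symm]; exact hab
  unfold quad at ha hb
  simp only [bil_add_left, bil_add_right, bil_smul_left, bil_smul_right, ha, hb, hab, hba]
  ring

end AdSAux

open AdSAux in
/-- two points of AdS^{d+1} with x ≠ y and x ≠ −y lie on a common
timelike geodesic iff −1 < ⟨x, y⟩ < 1. -/
theorem timelike_related_iff (d : ℕ) (hd : 1 ≤ d)
    (x y : EuclideanSpace ℝ (Fin (d + 2)))
    (hx : quad d x = -1) (hy : quad d y = -1) (hxy : x ≠ y) (hxy' : x ≠ -y) :
    (∃ a b : EuclideanSpace ℝ (Fin (d + 2)),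
        quad d a = -1 ∧ quad d b = -1 ∧ bil d a b = 0 ∧
        ∃ t₁ t₂ : ℝ,
          x = Real.cos t₁ • a + Real.sin t₁ • b ∧
          y = Real.cos t₂ • a + Real.sin t₂ • b) ↔
      (-1 < bil d x y ∧ bil d x y < 1) := by
  constructor
  · rintro ⟨a, b, ha, hb, hab, t₁, t₂, hx1, hy1⟩
    have hval : bil d x y = -Real.cos (t₁ - t₂) := by
      rw [hx1, hy1, bil_expand a b _ _ _ _ ha hb hab, Real.cos_sub]
      ring
    have hc1 : Real.cos (t₁ - t₂) ≠ 1 := by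
      intro h
      have hs : Real.sin (t₁ - t₂) = 0 := by
        have := Real.sin_sq_add_cos_sq (t₁ - t₂)
        nlinarith
      apply hxy
      have hcos : Real.cos t₁ = Real.cos t₂ := by
        have := Real.cos_sub_cos t₁ t₂
        calc Real.cos t₁ = Real.cos ((t₁ - t₂) + t₂) := by ring_nf
          _ = Real.cos t₂ := by rw [Real.cos_add, h, hs]; ring
      have hsin : Real.sin t₁ = Real.sin t₂ := by
        calc Real.sin t₁ = Real.sin ((t₁ - t₂) + t₂) := by ring_nf
          _ = Real.sin t₂ := by rw [Real.sin_add, h, hs]; ring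
      rw [hx1, hy1, hcos, hsin]
    have hc2 : Real.cos (t₁ - t₂) ≠ -1 := by
      intro h
      have hs : Real.sin (t₁ - t₂) = 0 := by
        have := Real.sin_sq_add_cos_sq (t₁ - t₂)
        nlinarith
      apply hxy'
      have hcos : Real.cos t₁ = -Real.cos t₂ := by
        calc Real.cos t₁ = Real.cos ((t₁ - t₂) + t₂) := by ring_nf
          _ = -Real.cos t₂ := by rw [Real.cos_add, h, hs]; ring
      have hsin : Real.sin t₁ = -Real.sin t₂ := by
        calc Real.sin t₁ = Real.sin ((t₁ - t₂) + t₂) := by ring_nf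
          _ = -Real.sin t₂ := by rw [Real.sin_add, h, hs]; ring
      rw [hx1, hy1, hcos, hsin]
      ext i
      simp only [PiLp.add_apply, PiLp.smul_apply, PiLp.neg_apply, smul_eq_mul]
      ring
    have h1 := Real.neg_one_le_cos (t₁ - t₂)
    have h2 := Real.cos_le_one (t₁ - t₂)
    constructor
    · rw [hval]; cases' lt_or_eq_of_le h2 with h h
      · linarith
      · exact absurd h hc1
    · rw [hval]; cases' lt_or_eq_of_le h1 with h h
      · linarith
      · exact absurd h.symm hc2
  · rintro ⟨h1, h2⟩
    set c := bil d x y with hc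
    have hpos : 0 < 1 - c ^ 2 := by nlinarith
    set s := Real.sqrt (1 - c ^ 2) with hs
    have hspos : 0 < s := Real.sqrt_pos.mpr hpos
    have hs2 : s ^ 2 = 1 - c ^ 2 := Real.sq_sqrt hpos.le
    set b : EuclideanSpace ℝ (Fin (d + 2)) := s⁻¹ • (y + c • x) with hbdef
    have hbilxw : bil d x (y + c • x) = 0 := by
      rw [bil_add_right, bil_smul_right]
      unfold quad at hx
      rw [hx, ← hc]; ring
    have hqw : bil d (y + c • x) (y + c • x) = c ^ 2 - 1 := by
      rw [bil_add_left, bil_add_right, bil_add_right, bil_smul_left, bil_smul_left,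
        bil_smul_right, bil_smul_right]
      unfold quad at hx hy
      have hyx : bil d y x = c := by rw [bil_symm, ← hc]
      rw [hx, hy, hyx, ← hc]; ring
    have hqb : quad d b = -1 := by
      unfold quad
      rw [hbdef, bil_smul_left, bil_smul_right, hqw]
      field_simp
      nlinarith
    have hxb : bil d x b = 0 := by
      rw [hbdef, bil_smul_right, hbilxw]; ring
    refine ⟨x, b, hx, hqb, hxb, 0, Real.arccos (-c), ?_, ?_⟩
    · simp
    · have hcos : Real.cos (Real.arccos (-c)) = -c :=
        Real.cos_arccos (by linarith) (by linarith)
      have hsin : Real.sin (Real.arccos (-c)) = s := by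
        rw [Real.sin_arccos, hs]; ring_nf
      rw [hcos, hsin, hbdef, smul_smul, mul_inv_cancel₀ hspos.ne', one_smul]
      ext i
      simp only [PiLp.add_apply, PiLp.smul_apply, smul_eq_mul]
      ring
end
end

section
/- Let d ≥ 2 and let x, y, z ∈ ℝ^{d+2} be nonzero vectors with q(x) = q(y) = q(z) = 0 such that ⟨x, y⟩ < 0, ⟨y, z⟩ < 0 and ⟨x, z⟩ < 0. Then x, y, z are linearly independent and the restriction of q to Span(x, y, z) has signature (2,1); that is, there exist vectors u₁, u₂, u₃ spanning Span(x, y, z) with ⟨uᵢ, uⱼ⟩ = 0 for i ≠ j, q(u₁) = q(u₂) = 1 and q(u₃) = −1. -/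
noncomputable section

/-! The Gram matrix of `x, y, z` is `[[0, a, c], [a, 0, b], [c, b, 0]]` with `a, b, c < 0`; its
determinant `2abc` is nonzero, so the three vectors are independent. The vectors `x - y` and
`x + y` are orthogonal, of squares `-2a > 0` and `2a < 0`, and `w = z - (b/a) x - (c/a) y` is
orthogonal to both, of square `-2bc/a > 0`; rescaling these three gives the basis. -/

theorem Submodule.span_triple_smul_eq {R M : Type*} [Semiring R] [AddCommMonoid M] [Module R M]
    {p q r : M} {a b c : R} (ha : IsUnit a) (hb : IsUnit b) (hc : IsUnit c) :
    Submodule.span R {a • p, b • q, c • r} = Submodule.span R {p, q, r} := by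
  simp only [Submodule.span_insert, Submodule.span_singleton_smul_eq ha,
    Submodule.span_singleton_smul_eq hb, Submodule.span_singleton_smul_eq hc]

namespace LinearMap.BilinForm

variable {V : Type*} [AddCommGroup V] [Module ℝ V] {B : LinearMap.BilinForm ℝ V}

theorem linearIndependent_of_isotropic_triple (hB : B.IsSymm) {x y z : V}
    (hx : B x x = 0) (hy : B y y = 0) (hz : B z z = 0)
    (hxy : B x y ≠ 0) (hyz : B y z ≠ 0) (hxz : B x z ≠ 0) :
    LinearIndependent ℝ ![x, y, z] := by
  rw [Fintype.linearIndependent_iff]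
  intro g hg
  simp only [Fin.sum_univ_three, Matrix.cons_val_zero, Matrix.cons_val_one,
    Matrix.cons_val_two, Matrix.tail_cons, Matrix.head_cons] at hg
  have pair (v : V) : g 0 * B v x + g 1 * B v y + g 2 * B v z = 0 := by
    simpa using congrArg (B v) hg
  have ex := pair x
  have ey := pair y
  have ez := pair z
  rw [hB.eq y x] at ey
  rw [hB.eq z x, hB.eq z y] at ez
  simp only [hx, hy, hz, mul_zero, zero_add, add_zero] at ex ey ez
  have h2 : g 2 = 0 := by
    have : 2 * (B y z * B x z) * g 2 = 0 := by
      linear_combination B y z * ex + B x z * ey - B x y * ez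
    simpa [hyz, hxz] using this
  have h1 : g 1 = 0 := by simpa [h2, hxy] using ex
  have h0 : g 0 = 0 := by simpa [h2, hxy] using ey
  intro i
  fin_cases i <;> assumption

theorem exists_smul_apply_self_eq_one {v : V} (hv : 0 < B v v) :
    ∃ c : ℝ, c ≠ 0 ∧ B (c • v) (c • v) = 1 := by
  refine ⟨(√(B v v))⁻¹, by positivity, ?_⟩
  simp only [map_smul, LinearMap.smul_apply, smul_eq_mul, ← mul_assoc, ← mul_inv]
  rw [Real.mul_self_sqrt hv.le, inv_mul_cancel₀ hv.ne']

theorem exists_smul_apply_self_eq_neg_one {v : V} (hv : B v v < 0) :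
    ∃ c : ℝ, c ≠ 0 ∧ B (c • v) (c • v) = -1 := by
  obtain ⟨c, hc, h⟩ := exists_smul_apply_self_eq_one (B := -B) (by simpa using hv)
  exact ⟨c, hc, by simpa [neg_eq_iff_eq_neg] using h⟩

theorem exists_orthogonal_triple_of_isotropic (hB : B.IsSymm) {x y z : V}
    (hx : B x x = 0) (hy : B y y = 0) (hz : B z z = 0)
    (hxy : B x y < 0) (hyz : B y z < 0) (hxz : B x z < 0) :
    ∃ v₁ v₂ v₃ : V, Submodule.span ℝ {v₁, v₂, v₃} = Submodule.span ℝ {x, y, z} ∧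
      B v₁ v₂ = 0 ∧ B v₁ v₃ = 0 ∧ B v₂ v₃ = 0 ∧
      0 < B v₁ v₁ ∧ 0 < B v₂ v₂ ∧ B v₃ v₃ < 0 := by
  have ha : B x y ≠ 0 := hxy.ne
  set w := z - (B y z / B x y) • x - (B x z / B x y) • y with hw
  have hxw : B x w = 0 := by
    simp only [hw, map_sub, map_smul, smul_eq_mul, hx]
    field_simp
    ring
  have hyw : B y w = 0 := by
    simp only [hw, map_sub, map_smul, smul_eq_mul, hy, hB.eq y x]
    field_simp
    ring
  have hzw : B z w = -(2 * B y z * B x z) / B x y := by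
    simp only [hw, map_sub, map_smul, smul_eq_mul, hz, hB.eq z x, hB.eq z y]
    field_simp
    ring
  have hww : B w w = B z w := by
    nth_rw 1 [hw]
    simp only [map_sub, map_smul, LinearMap.sub_apply, LinearMap.smul_apply, smul_eq_mul, hxw, hyw]
    ring
  refine ⟨x - y, w, x + y, ?_, ?_, ?_, ?_, ?_, ?_, ?_⟩
  · refine Submodule.span_eq_span ?_ ?_ <;>
      simp only [Set.insert_subset_iff, Set.singleton_subset_iff, SetLike.mem_coe,
        Submodule.mem_span_triple]
    · exact ⟨⟨1, -1, 0, by module⟩,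
        ⟨-(B y z / B x y), -(B x z / B x y), 1, by rw [hw]; module⟩, ⟨1, 1, 0, by module⟩⟩
    · refine ⟨⟨1 / 2, 0, 1 / 2, by module⟩, ⟨-(1 / 2), 0, 1 / 2, by module⟩,
        ⟨(B y z - B x z) / (2 * B x y), 1, (B y z + B x z) / (2 * B x y), ?_⟩⟩
      rw [hw]
      field_simp
      module
  · simp [hxw, hyw]
  · simp [hx, hy, hB.eq y x]
  · simp [hB.eq w, hxw, hyw]
  · simpa [hx, hy, hB.eq y x] using hxy
  · rw [hww, hzw]
    have : 0 < B y z * B x z := mul_pos_of_neg_of_neg hyz hxz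
    exact div_pos_of_neg_of_neg (by linarith) hxy
  · simpa [hx, hy, hB.eq y x] using hxy

theorem exists_signature_two_one_basis_of_isotropic (hB : B.IsSymm) {x y z : V}
    (hx : B x x = 0) (hy : B y y = 0) (hz : B z z = 0)
    (hxy : B x y < 0) (hyz : B y z < 0) (hxz : B x z < 0) :
    ∃ u₁ u₂ u₃ : V, Submodule.span ℝ {u₁, u₂, u₃} = Submodule.span ℝ {x, y, z} ∧
      B u₁ u₂ = 0 ∧ B u₁ u₃ = 0 ∧ B u₂ u₃ = 0 ∧
      B u₁ u₁ = 1 ∧ B u₂ u₂ = 1 ∧ B u₃ u₃ = -1 := by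
  obtain ⟨v₁, v₂, v₃, hspan, h₁₂, h₁₃, h₂₃, h₁, h₂, h₃⟩ :=
    exists_orthogonal_triple_of_isotropic hB hx hy hz hxy hyz hxz
  obtain ⟨c₁, hc₁, h₁⟩ := exists_smul_apply_self_eq_one h₁
  obtain ⟨c₂, hc₂, h₂⟩ := exists_smul_apply_self_eq_one h₂
  obtain ⟨c₃, hc₃, h₃⟩ := exists_smul_apply_self_eq_neg_one h₃
  refine ⟨c₁ • v₁, c₂ • v₂, c₃ • v₃,
    (Submodule.span_triple_smul_eq hc₁.isUnit hc₂.isUnit hc₃.isUnit).trans hspan,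
    ?_, ?_, ?_, h₁, h₂, h₃⟩ <;> simp [h₁₂, h₁₃, h₂₃]

end LinearMap.BilinForm

theorem bil_add_left (d : ℕ) (x y z : EuclideanSpace ℝ (Fin (d + 2))) :
    bil d (x + y) z = bil d x z + bil d y z := by
  simp only [bil, PiLp.add_apply, ← Finset.sum_add_distrib]
  exact Finset.sum_congr rfl fun i _ => by ring

theorem bil_smul_left (d : ℕ) (c : ℝ) (x y : EuclideanSpace ℝ (Fin (d + 2))) :
    bil d (c • x) y = c * bil d x y := by
  simp only [bil, PiLp.smul_apply, smul_eq_mul, Finset.mul_sum]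
  exact Finset.sum_congr rfl fun i _ => by ring

theorem bil_comm (d : ℕ) (x y : EuclideanSpace ℝ (Fin (d + 2))) : bil d x y = bil d y x :=
  Finset.sum_congr rfl fun i _ => by ring

def bilForm (d : ℕ) : LinearMap.BilinForm ℝ (EuclideanSpace ℝ (Fin (d + 2))) :=
  LinearMap.mk₂ ℝ (bil d) (bil_add_left d) (bil_smul_left d)
    (fun x y z => by simp only [bil_comm d x, bil_add_left])
    (fun c x y => by simp only [bil_comm d x, bil_smul_left, smul_eq_mul])

theorem bilForm_isSymm (d : ℕ) : (bilForm d).IsSymm := ⟨bil_comm d⟩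

theorem acausal_triple_signature_general (d : ℕ)
    (x y z : EuclideanSpace ℝ (Fin (d + 2)))
    (hx : quad d x = 0) (hy : quad d y = 0) (hz : quad d z = 0)
    (hxy : bil d x y < 0) (hyz : bil d y z < 0) (hxz : bil d x z < 0) :
    LinearIndependent ℝ ![x, y, z] ∧
      ∃ u₁ u₂ u₃ : EuclideanSpace ℝ (Fin (d + 2)),
        Submodule.span ℝ {u₁, u₂, u₃} = Submodule.span ℝ {x, y, z} ∧
        bil d u₁ u₂ = 0 ∧ bil d u₁ u₃ = 0 ∧ bil d u₂ u₃ = 0 ∧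
        quad d u₁ = 1 ∧ quad d u₂ = 1 ∧ quad d u₃ = -1 :=
  ⟨(bilForm d).linearIndependent_of_isotropic_triple (bilForm_isSymm d) hx hy hz
      hxy.ne hyz.ne hxz.ne,
    (bilForm d).exists_signature_two_one_basis_of_isotropic (bilForm_isSymm d) hx hy hz
      hxy hyz hxz⟩

/-- if three nonzero isotropic vectors are pairwise space related
(⟨·,·⟩ < 0), then they are linearly independent and q restricted to their span
has signature (2,1). -/
theorem acausal_triple_signature (d : ℕ) (hd : 2 ≤ d)
    (x y z : EuclideanSpace ℝ (Fin (d + 2)))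
    (hx0 : x ≠ 0) (hy0 : y ≠ 0) (hz0 : z ≠ 0)
    (hx : quad d x = 0) (hy : quad d y = 0) (hz : quad d z = 0)
    (hxy : bil d x y < 0) (hyz : bil d y z < 0) (hxz : bil d x z < 0) :
    LinearIndependent ℝ ![x, y, z] ∧
      ∃ u₁ u₂ u₃ : EuclideanSpace ℝ (Fin (d + 2)),
        Submodule.span ℝ {u₁, u₂, u₃} = Submodule.span ℝ {x, y, z} ∧
        bil d u₁ u₂ = 0 ∧ bil d u₁ u₃ = 0 ∧ bil d u₂ u₃ = 0 ∧
        quad d u₁ = 1 ∧ quad d u₂ = 1 ∧ quad d u₃ = -1 :=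
  acausal_triple_signature_general d x y z hx hy hz hxy hyz hxz
end
end

section
/- Let d ≥ 1, let (H, d_H) be a metric space and let i : H → AdS^{d+1} be a spacelike immersion. Define π : AdS^{d+1} → S^d_+ by π(v) = (1, v₁, …, v_d)/√(1 + v₁² + ⋯ + v_d²) (so that π(Φ(θ, x)) = x for all θ ∈ ℝ, x ∈ S^d_+). Then the map p ↦ π(i(p)) from H to S^d_+ ⊂ ℝ^{d+1} is locally bi-Lipschitz: every point of H has a neighbourhood U and constants 0 < k ≤ K such that k·d_H(p, p') ≤ ‖π(i(p)) − π(i(p'))‖ ≤ K·d_H(p, p') for all p, p' ∈ U. -/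
noncomputable section

/-- The open upper hemisphere S^d_+ ⊂ ℝ^{d+1}. -/
def SdPlus (d : ℕ) : Set (EuclideanSpace ℝ (Fin (d + 1))) := {x | ‖x‖ = 1 ∧ 0 < x 0}

/-- The map Φ(θ, x) = (x₁/x₀, …, x_d/x₀, cos θ/x₀, sin θ/x₀). -/
def Phi (d : ℕ) (θ : ℝ) (x : EuclideanSpace ℝ (Fin (d + 1))) :
    EuclideanSpace ℝ (Fin (d + 2)) :=
  WithLp.toLp 2 fun i => if h : (i : ℕ) < d then x ⟨(i : ℕ) + 1, by omega⟩ / x 0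
    else if (i : ℕ) = d then Real.cos θ / x 0 else Real.sin θ / x 0
/-- A spacelike immersion from a metric space into AdS^{d+1} = {q = −1}:
a locally Lipschitz map such that, locally, ⟨i(p), i(p')⟩ ≤ −1 − c·d(p,p')². -/
def IsSpacelikeImmersion {H : Type*} [MetricSpace H] (d : ℕ)
    (i : H → EuclideanSpace ℝ (Fin (d + 2))) : Prop :=
  LocallyLipschitz i ∧
  ∀ p : H, ∃ U ∈ nhds p, ∃ c : ℝ, 0 < c ∧
    ∀ p' ∈ U, ∀ p'' ∈ U, bil d (i p') (i p'') ≤ -1 - c * dist p' p'' ^ 2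

/-- The projection π : AdS^{d+1} → S^d_+, v ↦ (1, v₁, …, v_d)/√(1 + v₁² + ⋯ + v_d²),
inverse to x ↦ Φ(θ, x) on each slice. -/
def projSd (d : ℕ) (v : EuclideanSpace ℝ (Fin (d + 2))) :
    EuclideanSpace ℝ (Fin (d + 1)) :=
  WithLp.toLp 2 fun i => (if (i : ℕ) = 0 then 1 else v ⟨(i : ℕ) - 1, by have := i.isLt; omega⟩) /
    Real.sqrt (1 + ∑ j : Fin d, v ⟨(j : ℕ), by have := j.isLt; omega⟩ ^ 2)

/-! The projection is `π v = normalize (lift d v)` with `lift d v = (1, v₁, …, v_d)`. Since `lift`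
is 1-Lipschitz and `‖lift d v‖ ≥ 1`, `π` is 2-Lipschitz, which gives the upper bound.
On AdS the time part `(v_{d+1}, v_{d+2})` has the same norm as `lift d v`, so Cauchy–Schwarz in
the time plane gives `⟪lift v, lift w⟫ ≤ 1 + ⟨v, w⟩ + ‖lift v‖ ‖lift w‖`. Hence
`‖π v - π w‖² = 2 (‖lift v‖ ‖lift w‖ - ⟪lift v, lift w⟫) / (‖lift v‖ ‖lift w‖)` is at least
`2 (-1 - ⟨v, w⟩) / (‖lift v‖ ‖lift w‖)`, which the spacelike condition bounds below by a multiple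
of `dist p p' ^ 2` on a neighbourhood where `‖lift (i p)‖` stays bounded. -/

namespace NormedSpace

variable {V : Type*}

theorem norm_normalize_sub_normalize_le [NormedAddCommGroup V] [NormedSpace ℝ V]
    {x : V} (hx : x ≠ 0) (y : V) :
    ‖normalize x - normalize y‖ ≤ 2 * ‖x - y‖ / ‖x‖ := by
  have hx' : 0 < ‖x‖ := norm_pos_iff.mpr hx
  have hsplit : normalize x - normalize y = ‖x‖⁻¹ • (x - y) + (‖x‖⁻¹ • y - normalize y) := by
    simp only [normalize, smul_sub]; abel
  have hrescale : ‖‖x‖⁻¹ • y - normalize y‖ ≤ ‖x - y‖ / ‖x‖ := by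
    by_cases hy : y = 0
    · rw [hy, smul_zero, normalize_zero_eq_zero, sub_self, norm_zero]
      positivity
    · have hy' : 0 < ‖y‖ := norm_pos_iff.mpr hy
      calc ‖‖x‖⁻¹ • y - normalize y‖ = |‖y‖ - ‖x‖| / ‖x‖ := by
            have hinv : ‖x‖⁻¹ - ‖y‖⁻¹ = (‖y‖ - ‖x‖) / (‖x‖ * ‖y‖) := by field_simp
            rw [normalize, ← sub_smul, norm_smul, Real.norm_eq_abs, hinv, abs_div,
              abs_of_pos (mul_pos hx' hy')]
            field_simp
        _ ≤ ‖x - y‖ / ‖x‖ := by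
            gcongr; rw [abs_sub_comm]; exact abs_norm_sub_norm_le x y
  calc ‖normalize x - normalize y‖
      ≤ ‖‖x‖⁻¹ • (x - y)‖ + ‖‖x‖⁻¹ • y - normalize y‖ := hsplit ▸ norm_add_le _ _
    _ ≤ ‖x - y‖ / ‖x‖ + ‖x - y‖ / ‖x‖ := by
        gcongr
        rw [norm_smul, norm_inv, norm_norm, inv_mul_eq_div]
    _ = 2 * ‖x - y‖ / ‖x‖ := by ring

theorem norm_normalize_sub_normalize_sq [NormedAddCommGroup V] [InnerProductSpace ℝ V]
    {x y : V} (hx : x ≠ 0) (hy : y ≠ 0) :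
    ‖normalize x - normalize y‖ ^ 2 = 2 * (‖x‖ * ‖y‖ - inner ℝ x y) / (‖x‖ * ‖y‖) := by
  have hx' : ‖x‖ ≠ 0 := norm_ne_zero_iff.mpr hx
  have hy' : ‖y‖ ≠ 0 := norm_ne_zero_iff.mpr hy
  rw [norm_sub_sq_real, norm_normalize hx, norm_normalize hy, normalize, normalize,
    real_inner_smul_left, real_inner_smul_right]
  field_simp
  ring

end NormedSpace

namespace AdS

variable {d : ℕ}

def lift (d : ℕ) (v : EuclideanSpace ℝ (Fin (d + 2))) : EuclideanSpace ℝ (Fin (d + 1)) :=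
  WithLp.toLp 2 fun i => if (i : ℕ) = 0 then 1 else v ⟨(i : ℕ) - 1, by have := i.isLt; omega⟩

def timePart (d : ℕ) (v : EuclideanSpace ℝ (Fin (d + 2))) : EuclideanSpace ℝ (Fin 2) :=
  !₂[v (Fin.last d).castSucc, v (Fin.last (d + 1))]

theorem norm_lift (v : EuclideanSpace ℝ (Fin (d + 2))) :
    ‖lift d v‖ = √(1 + ∑ j : Fin d, v ⟨(j : ℕ), by have := j.isLt; omega⟩ ^ 2) := by
  rw [EuclideanSpace.norm_eq, Fin.sum_univ_succ]
  simp [lift]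

theorem projSd_eq_normalize (v : EuclideanSpace ℝ (Fin (d + 2))) :
    projSd d v = NormedSpace.normalize (lift d v) := by
  ext i
  rw [NormedSpace.normalize, PiLp.smul_apply, norm_lift, smul_eq_mul, inv_mul_eq_div]
  rfl

theorem one_le_norm_lift (v : EuclideanSpace ℝ (Fin (d + 2))) : 1 ≤ ‖lift d v‖ := by
  rw [norm_lift, Real.one_le_sqrt]
  exact le_add_of_nonneg_right (Finset.sum_nonneg fun _ _ => sq_nonneg _)

theorem lift_ne_zero (v : EuclideanSpace ℝ (Fin (d + 2))) : lift d v ≠ 0 :=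
  norm_pos_iff.mp (one_pos.trans_le (one_le_norm_lift v))

theorem norm_lift_sub_lift_le (v w : EuclideanSpace ℝ (Fin (d + 2))) :
    ‖lift d v - lift d w‖ ≤ ‖v - w‖ := by
  refine le_of_sq_le_sq ?_ (norm_nonneg _)
  rw [EuclideanSpace.norm_sq_eq, EuclideanSpace.norm_sq_eq, Fin.sum_univ_succ,
    Fin.sum_univ_castSucc, Fin.sum_univ_castSucc]
  simp only [lift, PiLp.sub_apply, Fin.val_zero, Fin.val_succ, add_tsub_cancel_right,
    if_true, sub_self, norm_zero, Real.norm_eq_abs, sq_abs, ne_eq,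
    OfNat.ofNat_ne_zero, not_false_eq_true, zero_pow, zero_add]
  exact le_add_of_le_of_nonneg (le_add_of_nonneg_right (sq_nonneg _)) (sq_nonneg _)

theorem lipschitzWith_lift : LipschitzWith 1 (lift d) :=
  LipschitzWith.of_dist_le_mul fun v w => by
    simpa [dist_eq_norm] using norm_lift_sub_lift_le v w

theorem lipschitzWith_projSd : LipschitzWith 2 (projSd d) :=
  LipschitzWith.of_dist_le_mul fun v w => by
    simp only [projSd_eq_normalize, dist_eq_norm, NNReal.coe_ofNat]
    calc _ ≤ 2 * ‖lift d v - lift d w‖ / ‖lift d v‖ :=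
          NormedSpace.norm_normalize_sub_normalize_le (lift_ne_zero v) _
      _ ≤ 2 * ‖lift d v - lift d w‖ := div_le_self (by positivity) (one_le_norm_lift v)
      _ ≤ 2 * ‖v - w‖ := by gcongr; exact norm_lift_sub_lift_le v w

theorem bil_eq_sub_inner_timePart (v w : EuclideanSpace ℝ (Fin (d + 2))) :
    bil d v w = ∑ j : Fin d, v j.castSucc.castSucc * w j.castSucc.castSucc
      - inner ℝ (timePart d v) (timePart d w) := by
  rw [bil, Fin.sum_univ_castSucc, Fin.sum_univ_castSucc]
  simp only [eps, Fin.val_castSucc, Fin.is_lt, ↓reduceIte, one_mul, Fin.val_last,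
    lt_self_iff_false, neg_mul, add_lt_iff_neg_left, not_lt_zero, timePart, PiLp.inner_apply,
    RCLike.inner_apply, Real.ringHom_apply, Fin.sum_univ_two, Matrix.cons_val_zero,
    Matrix.cons_val_one, Matrix.cons_val_fin_one]
  ring

theorem inner_lift (v w : EuclideanSpace ℝ (Fin (d + 2))) :
    inner ℝ (lift d v) (lift d w) = 1 + bil d v w + inner ℝ (timePart d v) (timePart d w) := by
  rw [bil_eq_sub_inner_timePart, add_assoc, sub_add_cancel, PiLp.inner_apply, Fin.sum_univ_succ]
  simp only [lift, Fin.val_eq_zero_iff, ↓reduceIte, inner_self_eq_norm_sq_to_K, norm_one,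
    Real.ringHom_apply, one_pow, Fin.succ_ne_zero, Fin.val_succ, add_tsub_cancel_right,
    RCLike.inner_apply, mul_comm, add_right_inj]
  -- `⟨j, _⟩` and `j.castSucc.castSucc` are definitionally the same index
  rfl

theorem norm_lift_eq_norm_timePart {v : EuclideanSpace ℝ (Fin (d + 2))} (hv : quad d v = -1) :
    ‖lift d v‖ = ‖timePart d v‖ := by
  have h := inner_lift v v
  rw [← quad, hv, real_inner_self_eq_norm_sq, real_inner_self_eq_norm_sq] at h
  rw [← sq_eq_sq₀ (norm_nonneg _) (norm_nonneg _), h]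
  ring

theorem inner_lift_le {v w : EuclideanSpace ℝ (Fin (d + 2))} (hv : quad d v = -1)
    (hw : quad d w = -1) :
    inner ℝ (lift d v) (lift d w) ≤ 1 + bil d v w + ‖lift d v‖ * ‖lift d w‖ := by
  rw [inner_lift, norm_lift_eq_norm_timePart hv, norm_lift_eq_norm_timePart hw]
  gcongr
  exact real_inner_le_norm _ _

theorem two_mul_div_le_norm_projSd_sub_sq {v w : EuclideanSpace ℝ (Fin (d + 2))}
    (hv : quad d v = -1) (hw : quad d w = -1) :
    2 * (-1 - bil d v w) / (‖lift d v‖ * ‖lift d w‖) ≤ ‖projSd d v - projSd d w‖ ^ 2 := by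
  rw [projSd_eq_normalize, projSd_eq_normalize,
    NormedSpace.norm_normalize_sub_normalize_sq (lift_ne_zero v) (lift_ne_zero w)]
  have := inner_lift_le hv hw
  gcongr ?_ / _
  linarith

theorem mul_le_norm_projSd_sub {v w : EuclideanSpace ℝ (Fin (d + 2))}
    (hv : quad d v = -1) (hw : quad d w = -1) {c M t : ℝ} (hc : 0 ≤ c)
    (hvM : ‖lift d v‖ ≤ M) (hwM : ‖lift d w‖ ≤ M) (hbil : bil d v w ≤ -1 - c * t ^ 2) :
    √(2 * c) / M * t ≤ ‖projSd d v - projSd d w‖ := by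
  have hvw : 0 < ‖lift d v‖ * ‖lift d w‖ :=
    mul_pos (norm_pos_iff.2 (lift_ne_zero v)) (norm_pos_iff.2 (lift_ne_zero w))
  have hM : 0 ≤ M := (norm_nonneg _).trans hvM
  refine le_of_sq_le_sq ?_ (norm_nonneg _)
  calc (√(2 * c) / M * t) ^ 2 = 2 * (c * t ^ 2) / (M * M) := by
        rw [mul_pow, div_pow, Real.sq_sqrt (by positivity)]; ring
    _ ≤ 2 * (c * t ^ 2) / (‖lift d v‖ * ‖lift d w‖) := by gcongr
    _ ≤ 2 * (-1 - bil d v w) / (‖lift d v‖ * ‖lift d w‖) := by gcongr; linarith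
    _ ≤ ‖projSd d v - projSd d w‖ ^ 2 := two_mul_div_le_norm_projSd_sub_sq hv hw

end AdS

open AdS in
theorem proj_comp_locally_biLipschitz_general (d : ℕ)
    {H : Type*} [MetricSpace H]
    (i : H → EuclideanSpace ℝ (Fin (d + 2)))
    (hAdS : ∀ p, quad d (i p) = -1)
    (hsp : IsSpacelikeImmersion d i) :
    ∀ p : H, ∃ U ∈ nhds p, ∃ k K : ℝ, 0 < k ∧ k ≤ K ∧
      ∀ p' ∈ U, ∀ p'' ∈ U,
        k * dist p' p'' ≤ ‖projSd d (i p') - projSd d (i p'')‖ ∧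
        ‖projSd d (i p') - projSd d (i p'')‖ ≤ K * dist p' p'' := by
  intro p
  obtain ⟨hLL, hSP⟩ := hsp
  obtain ⟨K₀, U₁, hU₁, hLip⟩ := hLL p
  obtain ⟨U₂, hU₂, c, hc, hbil⟩ := hSP p
  set M := ‖lift d (i p)‖ + 1
  have hU₃ : {p' | ‖lift d (i p')‖ < M} ∈ nhds p :=
    ((lipschitzWith_lift.continuous.comp hLL.continuous).norm.continuousAt).eventually_lt
      continuousAt_const (lt_add_one _)
  set k := √(2 * c) / M
  refine ⟨U₁ ∩ U₂ ∩ {p' | ‖lift d (i p')‖ < M}, Filter.inter_mem (Filter.inter_mem hU₁ hU₂) hU₃,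
    k, max k (2 * K₀), by positivity, le_max_left _ _, ?_⟩
  rintro p' ⟨⟨hp'₁, hp'₂⟩, hp'₃⟩ p'' ⟨⟨hp''₁, hp''₂⟩, hp''₃⟩
  refine ⟨mul_le_norm_projSd_sub (hAdS p') (hAdS p'') hc.le hp'₃.le hp''₃.le
    (hbil p' hp'₂ p'' hp''₂), ?_⟩
  rw [← dist_eq_norm]
  calc dist (projSd d (i p')) (projSd d (i p'')) ≤ 2 * K₀ * dist p' p'' :=
        (lipschitzWith_projSd.comp_lipschitzOnWith hLip).dist_le_mul p' hp'₁ p'' hp''₁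
    _ ≤ max k (2 * K₀) * dist p' p'' := by gcongr; exact le_max_right _ _

/-- for a spacelike immersion i : H → AdS^{d+1}, the composed map
p ↦ π(i(p)) into S^d_+ ⊂ ℝ^{d+1} is locally bi-Lipschitz. -/
theorem proj_comp_locally_biLipschitz (d : ℕ) (hd : 1 ≤ d)
    {H : Type*} [MetricSpace H]
    (i : H → EuclideanSpace ℝ (Fin (d + 2)))
    (hAdS : ∀ p, quad d (i p) = -1)
    (hsp : IsSpacelikeImmersion d i) :
    ∀ p : H, ∃ U ∈ nhds p, ∃ k K : ℝ, 0 < k ∧ k ≤ K ∧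
      ∀ p' ∈ U, ∀ p'' ∈ U,
        k * dist p' p'' ≤ ‖projSd d (i p') - projSd d (i p'')‖ ∧
        ‖projSd d (i p') - projSd d (i p'')‖ ≤ K * dist p' p'' :=
  proj_comp_locally_biLipschitz_general d i hAdS hsp
end
end

section
/- Let d ≥ 1, let U ⊆ S^d_+ be open (in the subspace topology of ℝ^{d+1}), let θ : U → ℝ be continuous, and define i : U → AdS^{d+1} by i(x) = Φ(θ(x), x). Equip U with the Euclidean distance of ℝ^{d+1}. Then i is a spacelike immersion if and only if θ is locally contracting, i.e. every point of U has a neighbourhood on which θ is k-Lipschitz for some k ∈ (0, 1). -/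
/-!
For unit vectors `x`, `y` with positive first coordinate,
`⟨Φ(θ, x), Φ(φ, y)⟩ = (1 - cos (θ - φ) - |x - y|² / 2) / (x₀ y₀) - 1`,
so the spacelike inequality with constant `c` says `1 - cos (θ - φ) ≤ (1/2 - c x₀ y₀) |x - y|²`.
Since `1 - cos t ≤ t² / 2` everywhere and `1 - cos t ≥ a t²` near `0` for every `a < 1/2`, this
holds locally for some `c > 0` exactly when `θ` is locally `k`-Lipschitz for some `k < 1`
(continuity of `θ` keeps `θ q - θ r` near `0`). The graph map is locally Lipschitz because `Φ` is
smooth where `x₀ ≠ 0`.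
-/

noncomputable section

open Real Filter Topology

section Phi

variable {d : ℕ} (θ : ℝ) (x : EuclideanSpace ℝ (Fin (d + 1)))

@[simp] lemma Phi_apply_castSucc_castSucc (i : Fin d) :
    Phi d θ x i.castSucc.castSucc = x i.succ / x 0 := by
  simp [Phi, Fin.succ]

@[simp] lemma Phi_apply_last_castSucc : Phi d θ x (Fin.last d).castSucc = cos θ / x 0 := by
  simp [Phi]

@[simp] lemma Phi_apply_last : Phi d θ x (Fin.last (d + 1)) = sin θ / x 0 := by
  simp [Phi]

@[simp] lemma eps_castSucc_castSucc (i : Fin d) : eps d i.castSucc.castSucc = 1 := by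
  simp [eps]

@[simp] lemma eps_last_castSucc : eps d (Fin.last d).castSucc = -1 := by
  simp [eps]

@[simp] lemma eps_last : eps d (Fin.last (d + 1)) = -1 := by
  simp [eps]

lemma contDiffAt_Phi {n : WithTop ℕ∞} {z : ℝ × EuclideanSpace ℝ (Fin (d + 1))} (hz : z.2 0 ≠ 0) :
    ContDiffAt ℝ n (fun z : ℝ × EuclideanSpace ℝ (Fin (d + 1)) => Phi d z.1 z.2) z := by
  refine contDiffAt_piLp' 2 fun i => ?_
  have hcoord (j : Fin (d + 1)) :
      ContDiffAt ℝ n (fun z : ℝ × EuclideanSpace ℝ (Fin (d + 1)) => z.2 j) z := by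
    fun_prop
  simp only [Phi, PiLp.toLp_apply]
  split_ifs
  all_goals exact ContDiffAt.div (by fun_prop) (hcoord 0) hz

end Phi

lemma real_inner_eq_one_sub_dist_sq {F : Type*} [NormedAddCommGroup F] [InnerProductSpace ℝ F]
    {x y : F} (hx : ‖x‖ = 1) (hy : ‖y‖ = 1) : inner ℝ x y = 1 - dist x y ^ 2 / 2 := by
  rw [dist_eq_norm, norm_sub_sq_real, hx, hy]
  ring

lemma EuclideanSpace.apply_le_one_of_norm_eq_one {ι : Type*} [Fintype ι]
    {x : EuclideanSpace ℝ ι} (hx : ‖x‖ = 1) (i : ι) : x i ≤ 1 :=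
  (le_abs_self _).trans (hx ▸ PiLp.norm_apply_le x i)

lemma bil_Phi {d : ℕ} (θ φ : ℝ) {x y : EuclideanSpace ℝ (Fin (d + 1))}
    (hx : ‖x‖ = 1) (hy : ‖y‖ = 1) (hx0 : x 0 ≠ 0) (hy0 : y 0 ≠ 0) :
    bil d (Phi d θ x) (Phi d φ y) = (1 - cos (θ - φ) - dist x y ^ 2 / 2) / (x 0 * y 0) - 1 := by
  have hsum : ∑ i : Fin d, x i.succ * y i.succ = 1 - dist x y ^ 2 / 2 - x 0 * y 0 := by
    rw [← real_inner_eq_one_sub_dist_sq hx hy, eq_sub_iff_add_eq',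
      ← Fin.sum_univ_succ (f := fun i => x i * y i)]
    simp [PiLp.inner_apply, mul_comm]
  simp only [bil, Fin.sum_univ_castSucc, Phi_apply_castSucc_castSucc, Phi_apply_last_castSucc,
    Phi_apply_last, eps_castSucc_castSucc, eps_last_castSucc, eps_last, one_mul,
    div_mul_div_comm, ← Finset.sum_div, hsum, cos_sub]
  field_simp
  ring

lemma bil_Phi_le_iff {d : ℕ} (θ φ c : ℝ) {x y : EuclideanSpace ℝ (Fin (d + 1))}
    (hx : x ∈ SdPlus d) (hy : y ∈ SdPlus d) :
    bil d (Phi d θ x) (Phi d φ y) ≤ -1 - c * dist x y ^ 2 ↔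
      1 - cos (θ - φ) ≤ (1 / 2 - c * (x 0 * y 0)) * dist x y ^ 2 := by
  rw [bil_Phi θ φ hx.1 hy.1 hx.2.ne' hy.2.ne', sub_le_iff_le_add,
    div_le_iff₀ (mul_pos hx.2 hy.2)]
  constructor <;> intro h <;> linarith

lemma one_sub_cos_le_of_abs_le {t k s : ℝ} (h : |t| ≤ k * s) : 1 - cos t ≤ k ^ 2 / 2 * s ^ 2 := by
  have hsq : t ^ 2 ≤ (k * s) ^ 2 := by
    simpa only [sq_abs] using pow_le_pow_left₀ (abs_nonneg t) h 2
  linarith [one_sub_sq_div_two_le_cos (x := t)]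

lemma eventually_mul_sq_le_one_sub_cos {a : ℝ} (ha : a < 1 / 2) :
    ∀ᶠ t in 𝓝 (0 : ℝ), a * t ^ 2 ≤ 1 - cos t := by
  filter_upwards [eventually_abs_sub_lt 0 (lt_min one_pos (sub_pos.2 ha))] with t ht
  rw [sub_zero, lt_min_iff] at ht
  have hbound := (abs_le.1 (cos_bound ht.1.le)).2
  have ht4 : |t| ^ 4 * (5 / 96) ≤ (1 / 2 - a) * t ^ 2 := by
    have habs : |t| * |t| ≤ 1 / 2 - a := by nlinarith [abs_nonneg t]
    rw [show |t| ^ 4 = t ^ 2 * (|t| * |t|) by rw [← sq_abs t]; ring]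
    nlinarith [mul_le_mul_of_nonneg_left habs (sq_nonneg t)]
  linarith

lemma abs_le_sqrt_div_mul_of_mul_sq_le {a b t s : ℝ} (ha : 0 < a) (hs : 0 ≤ s)
    (h : a * t ^ 2 ≤ b * s ^ 2) : |t| ≤ √(b / a) * s := by
  have hsq : t ^ 2 ≤ b / a * s ^ 2 := by
    rw [div_mul_eq_mul_div, le_div_iff₀ ha]
    linarith
  simpa only [Real.sqrt_mul' _ (sq_nonneg s), Real.sqrt_sq hs] using Real.abs_le_sqrt hsq

lemma locallyLipschitz_comp_of_contDiffAt {X E F : Type*} [PseudoMetricSpace X]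
    [NormedAddCommGroup E] [NormedSpace ℝ E] [NormedAddCommGroup F] [NormedSpace ℝ F]
    {f : E → F} {g : X → E} (hf : ∀ x, ContDiffAt ℝ 1 f (g x)) (hg : LocallyLipschitz g) :
    LocallyLipschitz (f ∘ g) := by
  intro x
  obtain ⟨Kg, t, ht, hgL⟩ := hg x
  obtain ⟨Kf, u, hu, hfL⟩ := (hf x).exists_lipschitzOnWith
  exact ⟨Kf * Kg, t ∩ g ⁻¹' u, inter_mem ht (hg.continuous.continuousAt hu),
    hfL.comp (hgL.mono Set.inter_subset_left)
      ((Set.mapsTo_preimage g u).mono_left Set.inter_subset_right)⟩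

def IsLocallyContracting {X : Type*} [PseudoMetricSpace X] (f : X → ℝ) : Prop :=
  ∀ p, ∃ W ∈ 𝓝 p, ∃ k : ℝ, 0 < k ∧ k < 1 ∧ ∀ q ∈ W, ∀ r ∈ W, |f q - f r| ≤ k * dist q r

lemma IsLocallyContracting.locallyLipschitz {X : Type*} [PseudoMetricSpace X] {f : X → ℝ}
    (hf : IsLocallyContracting f) : LocallyLipschitz f := by
  intro p
  obtain ⟨W, hW, k, hk, -, hlip⟩ := hf p
  refine ⟨k.toNNReal, W, hW, LipschitzOnWith.of_dist_le_mul fun q hq r hr => ?_⟩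
  rw [Real.dist_eq, Real.coe_toNNReal _ hk.le]
  exact hlip q hq r hr

section Graph

variable {d : ℕ} {U : Set (EuclideanSpace ℝ (Fin (d + 1)))} (hU : U ⊆ SdPlus d) {θ : U → ℝ}
include hU

lemma locallyLipschitz_Phi_graph (hθ : LocallyLipschitz θ) :
    LocallyLipschitz fun x : U => Phi d (θ x) x :=
  locallyLipschitz_comp_of_contDiffAt (g := fun x : U => (θ x, x.1))
    (fun x => contDiffAt_Phi (hU x.2).2.ne')
    (hθ.prodMk (LipschitzWith.subtype_val U).locallyLipschitz)

lemma isSpacelikeImmersion_of_isLocallyContracting (hθ : IsLocallyContracting θ) :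
    IsSpacelikeImmersion d fun x : U => Phi d (θ x) x := by
  refine ⟨locallyLipschitz_Phi_graph hU hθ.locallyLipschitz, fun p => ?_⟩
  obtain ⟨W, hW, k, hk, hk1, hlip⟩ := hθ p
  have hc : 0 ≤ (1 - k ^ 2) / 2 := by nlinarith
  refine ⟨W, hW, (1 - k ^ 2) / 2, by nlinarith, fun q hq r hr => ?_⟩
  have hP : q.1 0 * r.1 0 ≤ 1 :=
    mul_le_one₀ (EuclideanSpace.apply_le_one_of_norm_eq_one (hU q.2).1 0) (hU r.2).2.le
      (EuclideanSpace.apply_le_one_of_norm_eq_one (hU r.2).1 0)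
  rw [Subtype.dist_eq, bil_Phi_le_iff _ _ _ (hU q.2) (hU r.2)]
  calc 1 - cos (θ q - θ r) ≤ k ^ 2 / 2 * dist q.1 r.1 ^ 2 :=
        one_sub_cos_le_of_abs_le (hlip q hq r hr)
    _ ≤ _ := by
      gcongr
      linarith [mul_le_of_le_one_right hc hP]

lemma isLocallyContracting_of_isSpacelikeImmersion (hθ : Continuous θ)
    (h : IsSpacelikeImmersion d fun x : U => Phi d (θ x) x) : IsLocallyContracting θ := by
  intro p
  obtain ⟨V, hV, c, hc, hbil⟩ := h.2 p
  have hp₀ : 0 < p.1 0 := (hU p.2).2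
  -- `ε ≤ c q₀ r₀` near `p`, and `ε < 1/2` makes `k² = (1/2 - ε) / (1/2 - ε/2)` lie in `(0, 1)`.
  set ε := min (c * p.1 0 ^ 2 / 2) (1 / 4)
  have hε : 0 < ε := by positivity
  have hεc : ε < c * (p.1 0 * p.1 0) :=
    (min_le_left _ _).trans_lt (by nlinarith [mul_pos hc (mul_pos hp₀ hp₀)])
  have hε4 : ε ≤ 1 / 4 := min_le_right _ _
  have hnear : ∀ᶠ z : U × U in 𝓝 (p, p), z ∈ V ×ˢ V ∧ ε < c * (z.1.1 0 * z.2.1 0) ∧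
      (1 / 2 - ε / 2) * (θ z.1 - θ z.2) ^ 2 ≤ 1 - cos (θ z.1 - θ z.2) := by
    refine Eventually.and (prod_mem_nhds hV hV) (Eventually.and ?_ ?_)
    · have hcont : Continuous fun z : U × U => c * (z.1.1 0 * z.2.1 0) := by fun_prop
      exact (hcont.tendsto (p, p)).eventually_const_lt hεc
    · have hdiff : Tendsto (fun z : U × U => θ z.1 - θ z.2) (𝓝 (p, p)) (𝓝 0) := by
        rw [← sub_self (θ p)]
        exact (hθ.fst'.sub hθ.snd').tendsto (p, p)
      exact hdiff.eventually (eventually_mul_sq_le_one_sub_cos (by linarith))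
  rw [nhds_prod_eq] at hnear
  obtain ⟨W, hW, hWW⟩ := mem_prod_self_iff.1 hnear
  refine ⟨W, hW, √((1 / 2 - ε) / (1 / 2 - ε / 2)), Real.sqrt_pos.2 (by apply div_pos <;> linarith),
    (Real.sqrt_lt' one_pos).2 (by rw [one_pow, div_lt_one (by linarith)]; linarith),
    fun q hq r hr => ?_⟩
  obtain ⟨⟨hqV, hrV⟩, hεP, hcos⟩ := hWW (Set.mk_mem_prod hq hr)
  refine abs_le_sqrt_div_mul_of_mul_sq_le (by linarith) dist_nonneg ?_
  rw [Subtype.dist_eq]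
  calc _ ≤ 1 - cos (θ q - θ r) := hcos
    _ ≤ _ := (bil_Phi_le_iff _ _ _ (hU q.2) (hU r.2)).1 (hbil q hqV r hrV)
    _ ≤ _ := by gcongr

end Graph

theorem graph_spacelike_iff_locally_contracting_general (d : ℕ)
    (U : Set (EuclideanSpace ℝ (Fin (d + 1))))
    (hUsub : U ⊆ SdPlus d)
    (θ : U → ℝ) (hθ : Continuous θ) :
    IsSpacelikeImmersion d (fun x : U => Phi d (θ x) (x : EuclideanSpace ℝ (Fin (d + 1)))) ↔
      ∀ p : U, ∃ W ∈ nhds p, ∃ k : ℝ, 0 < k ∧ k < 1 ∧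
        ∀ q ∈ W, ∀ r ∈ W, |θ q - θ r| ≤ k * dist q r :=
  ⟨isLocallyContracting_of_isSpacelikeImmersion hUsub hθ,
    isSpacelikeImmersion_of_isLocallyContracting hUsub⟩

/-- for U ⊆ S^d_+ open (in the subspace topology of ℝ^{d+1}) with
the Euclidean distance, and θ : U → ℝ continuous, the graph map
i(x) = Φ(θ(x), x) is a spacelike immersion iff θ is locally contracting
(locally k-Lipschitz for some k ∈ (0,1)). -/
theorem graph_spacelike_iff_locally_contracting (d : ℕ) (hd : 1 ≤ d)
    (U : Set (EuclideanSpace ℝ (Fin (d + 1))))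
    (hUsub : U ⊆ SdPlus d)
    (hUopen : ∃ V : Set (EuclideanSpace ℝ (Fin (d + 1))), IsOpen V ∧ U = V ∩ SdPlus d)
    (θ : U → ℝ) (hθ : Continuous θ) :
    IsSpacelikeImmersion d (fun x : U => Phi d (θ x) (x : EuclideanSpace ℝ (Fin (d + 1)))) ↔
      ∀ p : U, ∃ W ∈ nhds p, ∃ k : ℝ, 0 < k ∧ k < 1 ∧
        ∀ q ∈ W, ∀ r ∈ W, |θ q - θ r| ≤ k * dist q r :=
  graph_spacelike_iff_locally_contracting_general d U hUsub θ hθ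
end
end
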